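/- arXiv:2206.08651 — 6 statements merged into one kernel-verified Lean document; each statement's English description precedes it below -/
import Mathlib

section
/- Let X and Y be Banach spaces, let W₁ ⊆ X be a relatively norm compact set and let W₂ ⊆ Y be a relatively weakly compact set. Then the set W₁ ⊗ W₂ := {x ⊗ y : x ∈ W₁, y ∈ W₂} is relatively weakly compact in the projective tensor product X ⊗π Y. -/
open Filter Topology Pointwise MeasureTheory
open scoped ENNReal

/-- A set is weakly compact if its image in the weak space is compact. -/
def WeaklyCompact {Z : Type*} [NormedAddCommGroup Z] [NormedSpace ℝ Z] (K : Set Z) : Prop :=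
  IsCompact (toWeakSpace ℝ Z '' K)

/-- A set is relatively weakly compact if the weak closure of its image in the weak space
is compact. -/
def RelWeaklyCompact {Z : Type*} [NormedAddCommGroup Z] [NormedSpace ℝ Z] (K : Set Z) : Prop :=
  IsCompact (closure (toWeakSpace ℝ Z '' K))

/-- A set is conditionally weakly compact (weakly precompact) if every sequence in it has a
weakly Cauchy subsequence. -/
def CondWeaklyCompact {Z : Type*} [NormedAddCommGroup Z] [NormedSpace ℝ Z] (D : Set Z) : Prop :=
  ∀ u : ℕ → Z, (∀ n, u n ∈ D) → ∃ φ : ℕ → ℕ, StrictMono φ ∧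
    ∀ f : Z →L[ℝ] ℝ, ∃ l : ℝ, Tendsto (fun n => f (u (φ n))) atTop (nhds l)

/-- `Z` is strongly weakly compactly generated by the weakly compact set `G`. -/
def SWCGBy {Z : Type*} [NormedAddCommGroup Z] [NormedSpace ℝ Z] (G : Set Z) : Prop :=
  WeaklyCompact G ∧ ∀ K : Set Z, WeaklyCompact K → ∀ ε : ℝ, 0 < ε →
    ∃ n : ℕ, K ⊆ (n : ℝ) • G + Metric.closedBall (0 : Z) ε

/-- A Banach space is strongly weakly compactly generated. -/
def IsSWCG (Z : Type*) [NormedAddCommGroup Z] [NormedSpace ℝ Z] : Prop :=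
  ∃ G : Set Z, SWCGBy G

/-- A Banach space is strongly conditionally weakly compactly generated. -/
def IsSCWCG (Z : Type*) [NormedAddCommGroup Z] [NormedSpace ℝ Z] : Prop :=
  ∃ G : Set Z, CondWeaklyCompact G ∧ ∀ C : Set Z, CondWeaklyCompact C → ∀ ε : ℝ, 0 < ε →
    ∃ n : ℕ, C ⊆ (n : ℝ) • G + Metric.closedBall (0 : Z) ε

/-- A Banach space is weakly sequentially complete if every weakly Cauchy sequence is weakly
convergent. -/
def WeaklySeqComplete (Z : Type*) [NormedAddCommGroup Z] [NormedSpace ℝ Z] : Prop :=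
  ∀ u : ℕ → Z, (∀ f : Z →L[ℝ] ℝ, ∃ l : ℝ, Tendsto (fun n => f (u n)) atTop (nhds l)) →
    ∃ z : Z, ∀ f : Z →L[ℝ] ℝ, Tendsto (fun n => f (u n)) atTop (nhds (f z))

/-- A Banach space has the Schur property if weakly convergent sequences are norm convergent. -/
def SchurProperty (Z : Type*) [NormedAddCommGroup Z] [NormedSpace ℝ Z] : Prop :=
  ∀ u : ℕ → Z, ∀ z : Z,
    (∀ f : Z →L[ℝ] ℝ, Tendsto (fun n => f (u n)) atTop (nhds (f z))) →
      Tendsto u atTop (nhds z)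

/-- `Z`, together with the continuous bilinear map `t`, is (a realization of) the projective
tensor product `X ⊗π Y`: the elementary tensors span a dense subspace, on that subspace the
norm is the projective norm, and every bilinear functional of norm at most one induces a
functional on `Z` of norm at most one. -/
def IsProjTensorProduct {X Y Z : Type*} [NormedAddCommGroup X] [NormedSpace ℝ X]
    [NormedAddCommGroup Y] [NormedSpace ℝ Y] [NormedAddCommGroup Z] [NormedSpace ℝ Z]
    (t : X →L[ℝ] Y →L[ℝ] Z) : Prop :=
  Dense ((Submodule.span ℝ {z : Z | ∃ x y, z = t x y} : Submodule ℝ Z) : Set Z) ∧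
  (∀ z : Z, z ∈ Submodule.span ℝ {z : Z | ∃ x y, z = t x y} →
    ‖z‖ = sInf {r : ℝ | ∃ (n : ℕ) (x : Fin n → X) (y : Fin n → Y),
      z = ∑ i, t (x i) (y i) ∧ r = ∑ i, ‖x i‖ * ‖y i‖}) ∧
  (∀ B : X →L[ℝ] Y →L[ℝ] ℝ, ‖B‖ ≤ 1 →
    ∃ φ : Z →L[ℝ] ℝ, ‖φ‖ ≤ 1 ∧ ∀ x y, φ (t x y) = B x y)

/-- An unconditional Schauder decomposition of `X` indexed by `I`, given by its family of
projections `proj C` for `C ⊆ I`: each `proj C x` is the unconditional sum of the coordinate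
projections `proj {i} x`, `i ∈ C`, the coordinate projections are pairwise disjoint idempotents
and they sum to the identity. -/
structure SchauderDecomp (I : Type*) (X : Type*) [NormedAddCommGroup X]
    [NormedSpace ℝ X] where
  proj : Set I → (X →L[ℝ] X)
  hasSum_proj : ∀ (C : Set I) (x : X), HasSum (fun i : C => proj {(i : I)} x) (proj C x)
  proj_univ : ∀ x, proj Set.univ x = x
  proj_idem : ∀ i : I, ∀ x, proj {i} (proj {i} x) = proj {i} x
  proj_disjoint : ∀ i j : I, i ≠ j → ∀ x, proj {i} (proj {j} x) = 0

/-- The decomposition is finite dimensional if each coordinate subspace is finite dimensional. -/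
def SchauderDecomp.FinDim {I X : Type*} [NormedAddCommGroup X] [NormedSpace ℝ X]
    (d : SchauderDecomp I X) : Prop :=
  ∀ i : I, FiniteDimensional ℝ (LinearMap.range ((d.proj {i}) : X →ₗ[ℝ] X))

/-- The decomposition has a disjoint lower `p`-estimate. -/
def SchauderDecomp.DisjLowerEstimate {I X : Type*} [NormedAddCommGroup X] [NormedSpace ℝ X]
    (d : SchauderDecomp I X) (p : ℝ) : Prop :=
  ∃ c : ℝ, 0 < c ∧ ∀ (r : ℕ) (C : Fin r → Set I), (∀ k, (C k).Finite) →
    (Pairwise fun k l => Disjoint (C k) (C l)) →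
    ∀ x : X, (∑ k, ‖d.proj (C k) x‖ ^ p) ^ (1 / p) ≤ c * ‖x‖

/-- if `W₁` is relatively norm compact and `W₂` is relatively weakly compact,
then `W₁ ⊗ W₂` is relatively weakly compact in `X ⊗π Y`. -/
theorem statement0 {X Y Z : Type*}
    [NormedAddCommGroup X] [NormedSpace ℝ X] [CompleteSpace X]
    [NormedAddCommGroup Y] [NormedSpace ℝ Y] [CompleteSpace Y]
    [NormedAddCommGroup Z] [NormedSpace ℝ Z] [CompleteSpace Z]
    (t : X →L[ℝ] Y →L[ℝ] Z) (ht : IsProjTensorProduct t)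
    (W₁ : Set X) (hW₁ : IsCompact (closure W₁))
    (W₂ : Set Y) (hW₂ : RelWeaklyCompact W₂) :
    RelWeaklyCompact {z : Z | ∃ x ∈ W₁, ∃ y ∈ W₂, z = t x y} := by
  classical
  have hinj : Function.Injective ((topDualPairing ℝ Z).flip) := by
    intro z w h
    exact (NormedSpace.eq_iff_forall_dual_eq ℝ).2 fun g => DFunLike.congr_fun h g
  haveI hT2 : T2Space (WeakSpace ℝ Z) := (WeakBilin.isEmbedding hinj).t2Space
  set K₁ := closure W₁ with hK₁def
  set K₂ := closure (toWeakSpace ℝ Y '' W₂) with hK₂def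
  have hK₂ : IsCompact K₂ := hW₂
  -- Weakly compact sets are norm bounded (Banach–Steinhaus).
  obtain ⟨M, hM⟩ : ∃ M, ∀ y ∈ K₂, ‖(toWeakSpace ℝ Y).symm y‖ ≤ M := by
    obtain ⟨C, hC⟩ := banach_steinhaus
      (g := fun y : K₂ => NormedSpace.inclusionInDoubleDual ℝ Y
        ((toWeakSpace ℝ Y).symm (y : WeakSpace ℝ Y)))
      (fun f => by
        obtain ⟨C, hC⟩ := hK₂.exists_bound_of_continuousOn
          ((WeakBilin.eval_continuous ((topDualPairing ℝ Y).flip) f).continuousOn)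
        exact ⟨C, fun y => hC _ y.2⟩)
    refine ⟨C, fun y hy => ?_⟩
    have h1 := hC ⟨y, hy⟩
    rwa [show ‖NormedSpace.inclusionInDoubleDual ℝ Y ((toWeakSpace ℝ Y).symm y)‖
        = ‖(toWeakSpace ℝ Y).symm y‖ from
      (NormedSpace.inclusionInDoubleDualLi ℝ).norm_map _] at h1
  set F : X × WeakSpace ℝ Y → WeakSpace ℝ Z :=
    fun p => toWeakSpace ℝ Z (t p.1 ((toWeakSpace ℝ Y).symm p.2)) with hFdef
  have hcont : ContinuousOn F (K₁ ×ˢ K₂) := by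
    rw [continuousOn_iff_continuous_restrict]
    apply WeakBilin.continuous_of_continuous_eval
    intro f
    show Continuous fun p : ↥(K₁ ×ˢ K₂) =>
      f (t (↑p : X × WeakSpace ℝ Y).1 ((toWeakSpace ℝ Y).symm (↑p : X × WeakSpace ℝ Y).2))
    rw [continuous_iff_continuousAt]
    rintro p₀
    obtain ⟨⟨x₀, y₀⟩, hp₀⟩ := p₀
    set A : ↥(K₁ ×ˢ K₂) → ℝ := fun p =>
      f (t ((↑p : X × WeakSpace ℝ Y).1 - x₀) ((toWeakSpace ℝ Y).symm (↑p : X × WeakSpace ℝ Y).2))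
      with hAdef
    set B : ↥(K₁ ×ˢ K₂) → ℝ := fun p =>
      f (t x₀ ((toWeakSpace ℝ Y).symm (↑p : X × WeakSpace ℝ Y).2)) with hBdef
    have key : ∀ p : ↥(K₁ ×ˢ K₂),
        f (t (↑p : X × WeakSpace ℝ Y).1 ((toWeakSpace ℝ Y).symm (↑p : X × WeakSpace ℝ Y).2))
          = A p + B p := by
      intro p
      simp only [hAdef, hBdef, map_sub, ContinuousLinearMap.sub_apply, ← map_add,
        sub_add_cancel]
    have hB : Continuous B := by
      have h2 : Continuous fun y : WeakSpace ℝ Y => (f.comp (t x₀)) ((toWeakSpace ℝ Y).symm y) :=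
        WeakBilin.eval_continuous ((topDualPairing ℝ Y).flip) (f.comp (t x₀))
      exact h2.comp (continuous_snd.comp continuous_subtype_val)
    have hA : Tendsto A (nhds ⟨(x₀, y₀), hp₀⟩) (nhds 0) := by
      have hbound : ∀ p : ↥(K₁ ×ˢ K₂),
          ‖A p‖ ≤ ‖f‖ * (‖t‖ * (‖(↑p : X × WeakSpace ℝ Y).1 - x₀‖ * M)) := by
        intro p
        obtain ⟨q, hq⟩ := p
        have hq2 : q.2 ∈ K₂ := hq.2
        have h1 := f.le_opNorm (t (q.1 - x₀) ((toWeakSpace ℝ Y).symm q.2))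
        have h2 := t.le_opNorm₂ (q.1 - x₀) ((toWeakSpace ℝ Y).symm q.2)
        have h3 := hM _ hq2
        have h4 : (0:ℝ) ≤ ‖t‖ * ‖q.1 - x₀‖ := by positivity
        have h5 : ‖t‖ * ‖q.1 - x₀‖ * ‖(toWeakSpace ℝ Y).symm q.2‖
            ≤ ‖t‖ * ‖q.1 - x₀‖ * M := mul_le_mul_of_nonneg_left h3 h4
        have h6 : ‖f‖ * ‖t (q.1 - x₀) ((toWeakSpace ℝ Y).symm q.2)‖
            ≤ ‖f‖ * (‖t‖ * ‖q.1 - x₀‖ * M) :=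
          mul_le_mul_of_nonneg_left (le_trans h2 h5) (norm_nonneg _)
        calc ‖A ⟨q, hq⟩‖ ≤ ‖f‖ * ‖t (q.1 - x₀) ((toWeakSpace ℝ Y).symm q.2)‖ := h1
          _ ≤ ‖f‖ * (‖t‖ * ‖q.1 - x₀‖ * M) := h6
          _ = ‖f‖ * (‖t‖ * (‖q.1 - x₀‖ * M)) := by ring
      have hb : Continuous fun p : ↥(K₁ ×ˢ K₂) =>
          ‖f‖ * (‖t‖ * (‖(↑p : X × WeakSpace ℝ Y).1 - x₀‖ * M)) := by
        have : Continuous fun p : ↥(K₁ ×ˢ K₂) => (↑p : X × WeakSpace ℝ Y).1 :=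
          continuous_fst.comp continuous_subtype_val
        fun_prop
      have hb0 : Tendsto (fun p : ↥(K₁ ×ˢ K₂) =>
          ‖f‖ * (‖t‖ * (‖(↑p : X × WeakSpace ℝ Y).1 - x₀‖ * M)))
          (nhds ⟨(x₀, y₀), hp₀⟩) (nhds 0) := by
        have := hb.tendsto (⟨(x₀, y₀), hp₀⟩ : ↥(K₁ ×ˢ K₂))
        simpa using this
      exact squeeze_zero_norm hbound hb0
    have hsum := hA.add (hB.tendsto ⟨(x₀, y₀), hp₀⟩)
    rw [zero_add] at hsum
    unfold ContinuousAt
    have hval2 : (fun p : ↥(K₁ ×ˢ K₂) =>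
        f (t (↑p : X × WeakSpace ℝ Y).1 ((toWeakSpace ℝ Y).symm (↑p : X × WeakSpace ℝ Y).2)))
        ⟨(x₀, y₀), hp₀⟩ = B ⟨(x₀, y₀), hp₀⟩ := rfl
    rw [hval2]
    exact hsum.congr (fun p => (key p).symm)
  have hKc : IsCompact (F '' (K₁ ×ˢ K₂)) := (hW₁.prod hK₂).image_of_continuousOn hcont
  refine IsCompact.of_isClosed_subset hKc isClosed_closure
    (closure_minimal ?_ hKc.isClosed)
  rintro z ⟨w, ⟨x, hx, y, hy, rfl⟩, rfl⟩
  refine ⟨(x, toWeakSpace ℝ Y y), ⟨subset_closure hx, subset_closure ⟨y, hy, rfl⟩⟩, ?_⟩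
  simp [hFdef]
end

section
/- Let X and Y be Banach spaces, let W₁ ⊆ X be a norm compact (i.e., norm closed and relatively norm compact) set and let W₂ ⊆ Y be a weakly compact set. Then the set W₁ ⊗ W₂ := {x ⊗ y : x ∈ W₁, y ∈ W₂} is weakly compact in the projective tensor product X ⊗π Y. -/
open Filter Topology Pointwise MeasureTheory
open scoped ENNReal

/-!
Weakly compact sets are norm bounded by the uniform boundedness principle. On a norm-bounded
set `S` the pairing `(f, y) ↦ f y` is jointly continuous for the norm topology on the dual and
the weak topology on `S`, since `|f y - f₀ y₀| ≤ ‖f - f₀‖ sup_S ‖·‖ + |f₀ y - f₀ y₀|`. Composing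
with `x ↦ φ ∘ t x` for each functional `φ`, the map `(x, y) ↦ t x y` is continuous from
`X × (W₂, weak)` into `Z` with its weak topology, so `W₁ ⊗ W₂` is the continuous image of the
compact set `W₁ × W₂`.
-/

open Set Bornology

section

variable {𝕜 E F G : Type*} [RCLike 𝕜]
  [NormedAddCommGroup E] [NormedSpace 𝕜 E] [NormedAddCommGroup F] [NormedSpace 𝕜 F]
  [NormedAddCommGroup G] [NormedSpace 𝕜 G]

theorem isBounded_of_isCompact_toWeakSpace_image {S : Set E}
    (hS : IsCompact (toWeakSpace 𝕜 E '' S)) : IsBounded S := by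
  have h_eval : ∀ f : StrongDual 𝕜 E, ∃ C,
      ∀ x : S, ‖NormedSpace.inclusionInDoubleDual 𝕜 E x f‖ ≤ C := by
    intro f
    obtain ⟨C, hC⟩ :=
      (hS.image (WeakBilin.eval_continuous (topDualPairing 𝕜 E).flip f)).isBounded.exists_norm_le
    exact ⟨C, fun x => hC _ ⟨_, ⟨x, x.2, rfl⟩, rfl⟩⟩
  obtain ⟨C, hC⟩ := banach_steinhaus h_eval
  refine isBounded_iff_forall_norm_le.2 ⟨C, fun x hx => ?_⟩
  rw [← (NormedSpace.inclusionInDoubleDualLi 𝕜).norm_map]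
  exact hC ⟨x, hx⟩

theorem continuousOn_apply_toWeakSpace_of_isBounded {S : Set F} (hS : IsBounded S) :
    ContinuousOn (fun p : StrongDual 𝕜 F × WeakSpace 𝕜 F => p.1 ((toWeakSpace 𝕜 F).symm p.2))
      (univ ×ˢ (toWeakSpace 𝕜 F '' S)) := by
  rintro ⟨f₀, w₀⟩ -
  obtain ⟨M, hM⟩ := hS.exists_norm_le
  have h_fixed :
      Continuous fun p : StrongDual 𝕜 F × WeakSpace 𝕜 F => f₀ ((toWeakSpace 𝕜 F).symm p.2) :=
    (WeakBilin.eval_continuous (topDualPairing 𝕜 F).flip f₀).comp continuous_snd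
  have h_small : Tendsto
      (fun p : StrongDual 𝕜 F × WeakSpace 𝕜 F => (p.1 - f₀) ((toWeakSpace 𝕜 F).symm p.2))
      (𝓝[univ ×ˢ (toWeakSpace 𝕜 F '' S)] (f₀, w₀)) (𝓝 0) := by
    refine squeeze_zero_norm' (a := fun p => ‖p.1 - f₀‖ * M) ?_ ?_
    · filter_upwards [self_mem_nhdsWithin] with p hp
      obtain ⟨-, y, hy, hyp⟩ := hp
      rw [← hyp]
      exact (p.1 - f₀).le_of_opNorm_le_of_le le_rfl (hM y hy)
    · exact (((continuous_fst.sub continuous_const).norm.mul continuous_const).tendsto'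
        (f₀, w₀) 0 (by simp)).mono_left nhdsWithin_le_nhds
  have := (h_fixed.tendsto (f₀, w₀)).mono_left nhdsWithin_le_nhds |>.add h_small
  simpa [ContinuousWithinAt] using this

theorem ContinuousLinearMap.continuousOn_toWeakSpace_apply₂ (B : E →L[𝕜] F →L[𝕜] G)
    {S : Set F} (hS : IsBounded S) :
    ContinuousOn
      (fun p : E × WeakSpace 𝕜 F => toWeakSpace 𝕜 G (B p.1 ((toWeakSpace 𝕜 F).symm p.2)))
      (univ ×ˢ (toWeakSpace 𝕜 F '' S)) := by
  rw [continuousOn_iff_continuous_domRestrict]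
  refine WeakBilin.continuous_of_continuous_eval _ fun φ => ?_
  have h_comp : Continuous fun x => φ ∘L B x :=
    (ContinuousLinearMap.compL 𝕜 F G 𝕜 φ).continuous.comp B.continuous
  have h_mapsTo : MapsTo (Prod.map (fun x => φ ∘L B x) id) (univ ×ˢ (toWeakSpace 𝕜 F '' S))
      (univ ×ˢ (toWeakSpace 𝕜 F '' S)) := fun p hp => ⟨trivial, hp.2⟩
  exact continuousOn_iff_continuous_domRestrict.1 <|
    (continuousOn_apply_toWeakSpace_of_isBounded hS).comp
      (h_comp.prodMap continuous_id).continuousOn h_mapsTo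

theorem isCompact_toWeakSpace_image2 (B : E →L[𝕜] F →L[𝕜] G) {K : Set E} (hK : IsCompact K)
    {W : Set F} (hW : IsCompact (toWeakSpace 𝕜 F '' W)) :
    IsCompact (toWeakSpace 𝕜 G '' image2 (fun x y => B x y) K W) := by
  have h_eq : toWeakSpace 𝕜 G '' image2 (fun x y => B x y) K W =
      (fun p : E × WeakSpace 𝕜 F => toWeakSpace 𝕜 G (B p.1 ((toWeakSpace 𝕜 F).symm p.2))) ''
        (K ×ˢ (toWeakSpace 𝕜 F '' W)) := by
    ext; simp [and_assoc]
  rw [h_eq]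
  exact (hK.prod hW).image_of_continuousOn <|
    (B.continuousOn_toWeakSpace_apply₂ (isBounded_of_isCompact_toWeakSpace_image hW)).mono
      (prod_mono (subset_univ K) subset_rfl)

end

theorem statement1_general {X Y Z : Type*}
    [NormedAddCommGroup X] [NormedSpace ℝ X]
    [NormedAddCommGroup Y] [NormedSpace ℝ Y]
    [NormedAddCommGroup Z] [NormedSpace ℝ Z]
    (t : X →L[ℝ] Y →L[ℝ] Z)
    (W₁ : Set X) (hW₁ : IsCompact W₁)
    (W₂ : Set Y) (hW₂ : WeaklyCompact W₂) :
    WeaklyCompact {z : Z | ∃ x ∈ W₁, ∃ y ∈ W₂, z = t x y} := by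
  have h_eq : {z : Z | ∃ x ∈ W₁, ∃ y ∈ W₂, z = t x y} = image2 (fun x y => t x y) W₁ W₂ := by
    ext; simp [eq_comm]
  rw [WeaklyCompact, h_eq]
  exact isCompact_toWeakSpace_image2 t hW₁ hW₂

/-- if `W₁` is norm compact and `W₂` is weakly compact, then `W₁ ⊗ W₂` is
weakly compact in `X ⊗π Y`. -/
theorem statement1 {X Y Z : Type*}
    [NormedAddCommGroup X] [NormedSpace ℝ X] [CompleteSpace X]
    [NormedAddCommGroup Y] [NormedSpace ℝ Y] [CompleteSpace Y]
    [NormedAddCommGroup Z] [NormedSpace ℝ Z] [CompleteSpace Z]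
    (t : X →L[ℝ] Y →L[ℝ] Z) (ht : IsProjTensorProduct t)
    (W₁ : Set X) (hW₁ : IsCompact W₁)
    (W₂ : Set Y) (hW₂ : WeaklyCompact W₂) :
    WeaklyCompact {z : Z | ∃ x ∈ W₁, ∃ y ∈ W₂, z = t x y} :=
  statement1_general t W₁ hW₁ W₂ hW₂
end

section
/- Let X and Y be Banach spaces, let W₁ ⊆ X be a relatively norm compact set and let W₂ ⊆ Y be a conditionally weakly compact set. Then the set W₁ ⊗ W₂ := {x ⊗ y : x ∈ W₁, y ∈ W₂} is conditionally weakly compact in the projective tensor product X ⊗π Y. -/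
open Filter Topology Pointwise MeasureTheory
open scoped ENNReal

/-- if `W₁` is relatively norm compact and `W₂` is conditionally weakly compact,
then `W₁ ⊗ W₂` is conditionally weakly compact in `X ⊗π Y`. -/
theorem statement2 {X Y Z : Type*}
    [NormedAddCommGroup X] [NormedSpace ℝ X] [CompleteSpace X]
    [NormedAddCommGroup Y] [NormedSpace ℝ Y] [CompleteSpace Y]
    [NormedAddCommGroup Z] [NormedSpace ℝ Z] [CompleteSpace Z]
    (t : X →L[ℝ] Y →L[ℝ] Z) (ht : IsProjTensorProduct t)
    (W₁ : Set X) (hW₁ : IsCompact (closure W₁))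
    (W₂ : Set Y) (hW₂ : CondWeaklyCompact W₂) :
    CondWeaklyCompact {z : Z | ∃ x ∈ W₁, ∃ y ∈ W₂, z = t x y} := by
  intro u hu
  choose a ha b hb hab using hu
  obtain ⟨x₀, -, φ, hφ, hx⟩ := hW₁.tendsto_subseq (fun n => subset_closure (ha n))
  obtain ⟨ψ, hψ, hy⟩ := hW₂ (fun n => b (φ n)) (fun n => hb (φ n))
  refine ⟨φ ∘ ψ, hφ.comp hψ, fun f => ?_⟩
  -- the subsequence of `b` is bounded, by Banach–Steinhaus
  obtain ⟨M, hM⟩ : ∃ M : ℝ, ∀ n, ‖b (φ (ψ n))‖ ≤ M := by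
    obtain ⟨C, hC⟩ := banach_steinhaus
      (g := fun n => (NormedSpace.inclusionInDoubleDualLi ℝ (E := Y)) (b (φ (ψ n))))
      (fun g => by
        obtain ⟨l, hl⟩ := hy g
        obtain ⟨c, hc⟩ := hl.norm.bddAbove_range
        exact ⟨c, fun n => hc (Set.mem_range_self n)⟩)
    refine ⟨C, fun n => ?_⟩
    have := hC n
    rwa [(NormedSpace.inclusionInDoubleDualLi ℝ (E := Y)).norm_map] at this
  obtain ⟨l, hl'⟩ := hy (f.comp (t x₀))
  simp only [ContinuousLinearMap.comp_apply] at hl'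
  refine ⟨l, ?_⟩
  have hx' : Tendsto (fun n => ‖a (φ (ψ n)) - x₀‖) atTop (nhds 0) := by
    have := (hx.comp hψ.tendsto_atTop)
    rwa [tendsto_iff_norm_sub_tendsto_zero] at this
  have key : Tendsto (fun n => f (u (φ (ψ n))) - f (t x₀ (b (φ (ψ n))))) atTop (nhds 0) := by
    refine squeeze_zero_norm (a := fun n => ‖f‖ * (‖t‖ * (M * ‖a (φ (ψ n)) - x₀‖))) (fun n => ?_) ?_
    ·
      have h1 : f (u (φ (ψ n))) - f (t x₀ (b (φ (ψ n))))
          = f (t (a (φ (ψ n)) - x₀) (b (φ (ψ n)))) := by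
        rw [hab (φ (ψ n))]
        simp [map_sub]
      rw [h1]
      calc ‖f (t (a (φ (ψ n)) - x₀) (b (φ (ψ n))))‖
          ≤ ‖f‖ * ‖t (a (φ (ψ n)) - x₀) (b (φ (ψ n)))‖ := f.le_opNorm _
        _ ≤ ‖f‖ * (‖t‖ * ‖a (φ (ψ n)) - x₀‖ * ‖b (φ (ψ n))‖) :=
            mul_le_mul_of_nonneg_left (t.le_opNorm₂ _ _) (norm_nonneg f)
        _ ≤ ‖f‖ * (‖t‖ * (M * ‖a (φ (ψ n)) - x₀‖)) := by
            rw [mul_assoc, mul_comm ‖a (φ (ψ n)) - x₀‖]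
            gcongr
            exact hM n
    · have : Tendsto (fun n => ‖f‖ * (‖t‖ * (M * ‖a (φ (ψ n)) - x₀‖))) atTop
          (nhds (‖f‖ * (‖t‖ * (M * 0)))) := by
        exact (hx'.const_mul M).const_mul ‖t‖ |>.const_mul ‖f‖
      simpa using this
  have := key.add hl'
  simpa using this
end

section
/- Let X and Y be Banach spaces with unconditional Schauder decompositions {X_i}_{i∈I} and {Y_j}_{j∈J}, with projections P_C (C ⊆ I) and Q_D (D ⊆ J), and let R_{C,D} := P_C ⊗ Q_D on X ⊗π Y. Then for every z ∈ X ⊗π Y, every ε > 0 and all finite sets C ⊆ I and D ⊆ J, there exist finite sets C' with C ⊆ C' ⊆ I and D' with D ⊆ D' ⊆ J such that ‖z − R_{C',D'}(z)‖_{X⊗πY} ≤ ε. -/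
open Filter Topology Pointwise MeasureTheory
open scoped ENNReal

set_option linter.unusedSectionVars false

section Aux

variable {I X : Type*} [NormedAddCommGroup X] [NormedSpace ℝ X]

lemma sum_bound_of_hasSum {f : I → X} {a : X} (h : HasSum f a) :
    ∃ B : ℝ, ∀ s : Finset I, ‖∑ i ∈ s, f i‖ ≤ B := by
  have h1 : ∀ᶠ s : Finset I in atTop, dist (∑ i ∈ s, f i) a < 1 :=
    Metric.tendsto_nhds.mp h 1 one_pos
  obtain ⟨s₀, hs₀⟩ := eventually_atTop.mp h1
  classical
  refine ⟨‖a‖ + 1 + ∑ i ∈ s₀, ‖f i‖, fun s => ?_⟩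
  have hsplit : ∑ i ∈ s ∪ s₀, f i = ∑ i ∈ s, f i + ∑ i ∈ s₀ \ s, f i := by
    rw [← Finset.sum_union Finset.disjoint_sdiff, Finset.union_sdiff_self_eq_union]
  have h2 : ∑ i ∈ s, f i = ∑ i ∈ s ∪ s₀, f i - ∑ i ∈ s₀ \ s, f i := by
    rw [hsplit]; abel
  rw [h2]
  have h3 : ‖∑ i ∈ s ∪ s₀, f i‖ ≤ ‖a‖ + 1 := by
    have := hs₀ (s ∪ s₀) Finset.subset_union_right
    rw [dist_eq_norm] at this
    have h5 : ‖∑ i ∈ s ∪ s₀, f i‖ ≤ ‖∑ i ∈ s ∪ s₀, f i - a‖ + ‖a‖ := by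
      have := norm_add_le (∑ i ∈ s ∪ s₀, f i - a) a
      simpa using this
    linarith
  have h4 : ‖∑ i ∈ s₀ \ s, f i‖ ≤ ∑ i ∈ s₀, ‖f i‖ := by
    calc ‖∑ i ∈ s₀ \ s, f i‖ ≤ ∑ i ∈ s₀ \ s, ‖f i‖ := norm_sum_le _ _
    _ ≤ ∑ i ∈ s₀, ‖f i‖ := Finset.sum_le_sum_of_subset_of_nonneg (Finset.sdiff_subset)
        (fun _ _ _ => norm_nonneg _)
  calc ‖∑ i ∈ s ∪ s₀, f i - ∑ i ∈ s₀ \ s, f i‖ ≤ ‖∑ i ∈ s ∪ s₀, f i‖ + ‖∑ i ∈ s₀ \ s, f i‖ :=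
    norm_sub_le _ _
  _ ≤ ‖a‖ + 1 + ∑ i ∈ s₀, ‖f i‖ := by linarith

lemma SchauderDecomp.proj_finset (d : SchauderDecomp I X) (s : Finset I) (x : X) :
    d.proj ↑s x = ∑ i ∈ s, d.proj {i} x := by
  have h := d.hasSum_proj ↑s x
  have h2 : HasSum (fun i : (↑s : Set I) => d.proj {(i : I)} x)
      (∑ i : (↑s : Set I), d.proj {(i : I)} x) := hasSum_fintype _
  rw [h.unique h2]
  rw [← Finset.sum_coe_sort s (fun i => d.proj {i} x)]
  exact Finset.sum_congr rfl fun i _ => rfl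

lemma SchauderDecomp.hasSum_univ (d : SchauderDecomp I X) (x : X) :
    HasSum (fun i : I => d.proj {i} x) x := by
  have h := d.hasSum_proj Set.univ x
  rw [d.proj_univ] at h
  exact (Equiv.Set.univ I).hasSum_iff.mp h

lemma SchauderDecomp.norm_proj_bound [CompleteSpace X] (d : SchauderDecomp I X) :
    ∃ M : ℝ, 0 ≤ M ∧ ∀ s : Finset I, ‖d.proj ↑s‖ ≤ M := by
  have hpt : ∀ x : X, ∃ B, ∀ s : Finset I, ‖d.proj ↑s x‖ ≤ B := by
    intro x
    obtain ⟨B, hB⟩ := sum_bound_of_hasSum (d.hasSum_univ x)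
    exact ⟨B, fun s => by rw [d.proj_finset]; exact hB s⟩
  obtain ⟨M, hM⟩ := banach_steinhaus (g := fun s : Finset I => d.proj ↑s) hpt
  exact ⟨max 0 M, le_max_left _ _, fun s => le_trans (hM s) (le_max_right _ _)⟩

lemma SchauderDecomp.tendsto_proj (d : SchauderDecomp I X) (x : X) :
    Tendsto (fun s : Finset I => d.proj ↑s x) atTop (nhds x) := by
  have ht : Tendsto (fun s : Finset I => ∑ i ∈ s, d.proj {i} x) atTop (nhds x) :=
    d.hasSum_univ x
  exact ht.congr (fun s => (d.proj_finset s x).symm)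

end Aux

section TP

variable {X Y Z : Type*} [NormedAddCommGroup X] [NormedSpace ℝ X]
  [NormedAddCommGroup Y] [NormedSpace ℝ Y] [NormedAddCommGroup Z] [NormedSpace ℝ Z]

lemma norm_t_apply_le {t : X →L[ℝ] Y →L[ℝ] Z} (ht : IsProjTensorProduct t) (x : X) (y : Y) :
    ‖t x y‖ ≤ ‖x‖ * ‖y‖ := by
  have hmem : t x y ∈ Submodule.span ℝ {z : Z | ∃ x y, z = t x y} :=
    Submodule.subset_span ⟨x, y, rfl⟩
  rw [ht.2.1 _ hmem]
  apply csInf_le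
  · refine ⟨0, fun r hr => ?_⟩
    obtain ⟨n, a, b, -, rfl⟩ := hr
    positivity
  · exact ⟨1, ![x], ![y], by simp, by simp⟩

lemma exists_rep {t : X →L[ℝ] Y →L[ℝ] Z} {w : Z}
    (hw : w ∈ Submodule.span ℝ {z : Z | ∃ x y, z = t x y}) :
    ∃ (n : ℕ) (a : Fin n → X) (b : Fin n → Y), w = ∑ i, t (a i) (b i) := by
  rw [Submodule.mem_span_set'] at hw
  obtain ⟨n, f, g, hg⟩ := hw
  choose a b hab using fun i => (g i).2
  refine ⟨n, fun i => f i • a i, b, ?_⟩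
  rw [← hg]
  refine Finset.sum_congr rfl fun i _ => ?_
  rw [hab i, _root_.map_smul, ContinuousLinearMap.smul_apply]

/-- Bound for an operator acting by a bounded bilinear rule on elementary tensors. -/
lemma R_norm_bound {t : X →L[ℝ] Y →L[ℝ] Z} (ht : IsProjTensorProduct t)
    (R : Z →L[ℝ] Z) {M : ℝ} (hM : 1 ≤ M)
    (key : ∀ x y, ‖R (t x y)‖ ≤ M * (‖x‖ * ‖y‖)) :
    ∀ w : Z, ‖R w‖ ≤ M * ‖w‖ := by
  have hMpos : (0:ℝ) < M := lt_of_lt_of_le one_pos hM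
  have hspan : ∀ w ∈ Submodule.span ℝ {z : Z | ∃ x y, z = t x y}, ‖R w‖ ≤ M * ‖w‖ := by
    intro w hw
    rw [ht.2.1 w hw]
    set S := {r : ℝ | ∃ (n : ℕ) (x : Fin n → X) (y : Fin n → Y),
      w = ∑ i, t (x i) (y i) ∧ r = ∑ i, ‖x i‖ * ‖y i‖} with hS
    have hne : S.Nonempty := by
      obtain ⟨n, a, b, hrep⟩ := exists_rep hw
      exact ⟨∑ i, ‖a i‖ * ‖b i‖, n, a, b, hrep, rfl⟩
    have hlow : ∀ r ∈ S, ‖R w‖ / M ≤ r := by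
      rintro r ⟨n, a, b, hrep, rfl⟩
      rw [div_le_iff₀ hMpos]
      calc ‖R w‖ = ‖∑ i, R (t (a i) (b i))‖ := by rw [hrep, map_sum]
      _ ≤ ∑ i, ‖R (t (a i) (b i))‖ := norm_sum_le _ _
      _ ≤ ∑ i, M * (‖a i‖ * ‖b i‖) := Finset.sum_le_sum fun i _ => key _ _
      _ = (∑ i, ‖a i‖ * ‖b i‖) * M := by rw [← Finset.mul_sum, mul_comm]
    have : ‖R w‖ / M ≤ sInf S := le_csInf hne hlow
    calc ‖R w‖ = M * (‖R w‖ / M) := by field_simp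
    _ ≤ M * sInf S := by
      exact mul_le_mul_of_nonneg_left this (le_of_lt hMpos)
  intro w
  have hcl : IsClosed {w : Z | ‖R w‖ ≤ M * ‖w‖} :=
    isClosed_le (R.continuous.norm) (continuous_const.mul continuous_norm)
  have hsub : (Submodule.span ℝ {z : Z | ∃ x y, z = t x y} : Set Z) ⊆
      {w : Z | ‖R w‖ ≤ M * ‖w‖} := fun w hw => hspan w hw
  have : closure (Submodule.span ℝ {z : Z | ∃ x y, z = t x y} : Set Z) ⊆
      {w : Z | ‖R w‖ ≤ M * ‖w‖} := by
    rw [← hcl.closure_eq]; exact closure_mono hsub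
  exact this (by rw [ht.1.closure_eq]; trivial)

end TP

/-- for every `z ∈ X ⊗π Y`, `ε > 0` and finite `C ⊆ I`, `D ⊆ J` there are finite
sets `C ⊆ C' ⊆ I`, `D ⊆ D' ⊆ J` with `‖z - R_{C',D'}(z)‖ ≤ ε`. -/
theorem statement4 {I J X Y Z : Type*}
    [NormedAddCommGroup X] [NormedSpace ℝ X] [CompleteSpace X]
    [NormedAddCommGroup Y] [NormedSpace ℝ Y] [CompleteSpace Y]
    [NormedAddCommGroup Z] [NormedSpace ℝ Z] [CompleteSpace Z]
    (dX : SchauderDecomp I X) (dY : SchauderDecomp J Y)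
    (t : X →L[ℝ] Y →L[ℝ] Z) (ht : IsProjTensorProduct t)
    (z : Z) (ε : ℝ) (hε : 0 < ε)
    (C : Set I) (hC : C.Finite) (D : Set J) (hD : D.Finite) :
    ∃ C' : Set I, ∃ D' : Set J, C ⊆ C' ∧ D ⊆ D' ∧ C'.Finite ∧ D'.Finite ∧
      ∀ R : Z →L[ℝ] Z, (∀ x y, R (t x y) = t (dX.proj C' x) (dY.proj D' y)) →
        ‖z - R z‖ ≤ ε := by
  obtain ⟨MX, hMX0, hMX⟩ := dX.norm_proj_bound
  obtain ⟨MY, hMY0, hMY⟩ := dY.norm_proj_bound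
  set M : ℝ := max 1 (MX * MY) with hMdef
  have hM1 : (1:ℝ) ≤ M := le_max_left _ _
  have hMpos : (0:ℝ) < M := lt_of_lt_of_le one_pos hM1
  set δ : ℝ := ε / (3 * M) with hδdef
  have hδpos : 0 < δ := div_pos hε (by positivity)
  -- approximate z by z₀ in the span
  obtain ⟨z₀, hz₀mem, hz₀dist⟩ := ht.1.exists_dist_lt z hδpos
  have hz₀near : ‖z - z₀‖ ≤ δ := by
    rw [← dist_eq_norm]; exact le_of_lt hz₀dist
  obtain ⟨n, a, b, hrep⟩ := exists_rep (t := t) hz₀mem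
  -- choose η
  set T : ℝ := ∑ i : Fin n, (‖b i‖ + MX * ‖a i‖) with hTdef
  have hT0 : 0 ≤ T := Finset.sum_nonneg fun i _ => by positivity
  set η : ℝ := (ε / 3) / (T + 1) with hηdef
  have hηpos : 0 < η := div_pos (by positivity) (by positivity)
  -- choose C'
  have hevX : ∀ᶠ s : Finset I in Filter.atTop,
      (hC.toFinset ≤ s ∧ ∀ k : Fin n, ‖a k - dX.proj ↑s (a k)‖ ≤ η) := by
    refine (Filter.eventually_ge_atTop hC.toFinset).and (eventually_all.mpr fun k => ?_)
    have h1 := (dX.tendsto_proj (a k)).eventually (Metric.ball_mem_nhds (a k) hηpos)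
    filter_upwards [h1] with s hs
    have : dist (dX.proj ↑s (a k)) (a k) < η := Metric.mem_ball.mp hs
    rw [dist_comm, dist_eq_norm] at this
    exact le_of_lt this
  obtain ⟨s, hsC, hsa⟩ := hevX.exists
  have hevY : ∀ᶠ u : Finset J in Filter.atTop,
      (hD.toFinset ≤ u ∧ ∀ k : Fin n, ‖b k - dY.proj ↑u (b k)‖ ≤ η) := by
    refine (Filter.eventually_ge_atTop hD.toFinset).and (eventually_all.mpr fun k => ?_)
    have h1 := (dY.tendsto_proj (b k)).eventually (Metric.ball_mem_nhds (b k) hηpos)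
    filter_upwards [h1] with u hu
    have : dist (dY.proj ↑u (b k)) (b k) < η := Metric.mem_ball.mp hu
    rw [dist_comm, dist_eq_norm] at this
    exact le_of_lt this
  obtain ⟨u, huD, hub⟩ := hevY.exists
  refine ⟨↑s, ↑u, ?_, ?_, s.finite_toSet, u.finite_toSet, ?_⟩
  · intro i hi; exact hsC (hC.mem_toFinset.mpr hi)
  · intro j hj; exact huD (hD.mem_toFinset.mpr hj)
  intro R hR
  -- global bound on R
  have key : ∀ x y, ‖R (t x y)‖ ≤ M * (‖x‖ * ‖y‖) := by
    intro x y
    rw [hR]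
    calc ‖t (dX.proj ↑s x) (dY.proj ↑u y)‖ ≤ ‖dX.proj ↑s x‖ * ‖dY.proj ↑u y‖ :=
      norm_t_apply_le ht _ _
    _ ≤ (MX * ‖x‖) * (MY * ‖y‖) := by
        apply mul_le_mul _ _ (norm_nonneg _) (by positivity)
        · exact le_trans ((dX.proj ↑s).le_opNorm x)
            (mul_le_mul_of_nonneg_right (hMX s) (norm_nonneg _))
        · exact le_trans ((dY.proj ↑u).le_opNorm y)
            (mul_le_mul_of_nonneg_right (hMY u) (norm_nonneg _))
    _ = (MX * MY) * (‖x‖ * ‖y‖) := by ring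
    _ ≤ M * (‖x‖ * ‖y‖) := mul_le_mul_of_nonneg_right (le_max_right _ _) (by positivity)
  have hRglob : ∀ w : Z, ‖R w‖ ≤ M * ‖w‖ := R_norm_bound ht R hM1 key
  -- bound on z₀ - R z₀
  have hz0R : ‖z₀ - R z₀‖ ≤ ε / 3 := by
    have hRz₀ : R z₀ = ∑ i, t (dX.proj ↑s (a i)) (dY.proj ↑u (b i)) := by
      rw [hrep, map_sum]
      exact Finset.sum_congr rfl fun i _ => hR _ _
    rw [hrep] at hRz₀
    rw [hrep, hRz₀, ← Finset.sum_sub_distrib]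
    have hterm : ∀ i : Fin n, ‖t (a i) (b i) - t (dX.proj ↑s (a i)) (dY.proj ↑u (b i))‖ ≤
        η * (‖b i‖ + MX * ‖a i‖) := by
      intro i
      have hsplit : t (a i) (b i) - t (dX.proj ↑s (a i)) (dY.proj ↑u (b i)) =
          t (a i - dX.proj ↑s (a i)) (b i)
            + t (dX.proj ↑s (a i)) (b i - dY.proj ↑u (b i)) := by
        rw [map_sub, ContinuousLinearMap.sub_apply, map_sub]
        abel
      rw [hsplit]
      have h1 : ‖t (a i - dX.proj ↑s (a i)) (b i)‖ ≤ η * ‖b i‖ :=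
        le_trans (norm_t_apply_le ht _ _)
          (mul_le_mul_of_nonneg_right (hsa i) (norm_nonneg _))
      have h2 : ‖t (dX.proj ↑s (a i)) (b i - dY.proj ↑u (b i))‖ ≤ (MX * ‖a i‖) * η := by
        refine le_trans (norm_t_apply_le ht _ _) ?_
        apply mul_le_mul _ (hub i) (norm_nonneg _) (by positivity)
        exact le_trans ((dX.proj ↑s).le_opNorm (a i))
          (mul_le_mul_of_nonneg_right (hMX s) (norm_nonneg _))
      calc ‖_ + _‖ ≤ ‖t (a i - dX.proj ↑s (a i)) (b i)‖
          + ‖t (dX.proj ↑s (a i)) (b i - dY.proj ↑u (b i))‖ := norm_add_le _ _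
      _ ≤ η * ‖b i‖ + (MX * ‖a i‖) * η := add_le_add h1 h2
      _ = η * (‖b i‖ + MX * ‖a i‖) := by ring
    calc ‖∑ i, (t (a i) (b i) - t (dX.proj ↑s (a i)) (dY.proj ↑u (b i)))‖
        ≤ ∑ i, ‖t (a i) (b i) - t (dX.proj ↑s (a i)) (dY.proj ↑u (b i))‖ := norm_sum_le _ _
    _ ≤ ∑ i, η * (‖b i‖ + MX * ‖a i‖) := Finset.sum_le_sum fun i _ => hterm i
    _ = η * T := by rw [hTdef, Finset.mul_sum]
    _ ≤ η * (T + 1) := by nlinarith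
    _ = ε / 3 := by rw [hηdef]; field_simp
  -- final estimate
  have hfin : z - R z = (z - z₀) + (z₀ - R z₀) + (R z₀ - R z) := by abel
  have hMδ : M * δ = ε / 3 := by
    rw [hδdef]; field_simp
  calc ‖z - R z‖ = ‖(z - z₀) + (z₀ - R z₀) + (R z₀ - R z)‖ := by rw [hfin]
  _ ≤ ‖z - z₀‖ + ‖z₀ - R z₀‖ + ‖R z₀ - R z‖ := norm_add₃_le
  _ ≤ δ + ε / 3 + M * δ := by
      refine add_le_add (add_le_add hz₀near hz0R) ?_
      have : R z₀ - R z = R (z₀ - z) := (map_sub R z₀ z).symm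
      rw [this]
      calc ‖R (z₀ - z)‖ ≤ M * ‖z₀ - z‖ := hRglob _
      _ ≤ M * δ := by
          rw [norm_sub_rev]
          exact mul_le_mul_of_nonneg_left hz₀near (le_of_lt hMpos)
  _ ≤ M * δ + ε / 3 + M * δ := by
      refine add_le_add (add_le_add ?_ le_rfl) le_rfl
      nlinarith
  _ = ε := by rw [hMδ]; ring
end

section
/- Let 1 < p, q < ∞ with 1/p + 1/q ≥ 1. Let X and Y be Banach spaces with unconditional Schauder decompositions {X_i}_{i∈I} and {Y_j}_{j∈J} having a disjoint lower p-estimate and a disjoint lower q-estimate, respectively, with associated projections P_C (C ⊆ I), Q_D (D ⊆ J) satisfying ‖P_C‖ ≤ 1 and ‖Q_D‖ ≤ 1 for all nonempty C, D, and let R_{C,D} := P_C ⊗ Q_D on X ⊗π Y. Then there is a constant d > 0 such that, for all sequences (A_n)_{n∈ℕ} and (B_n)_{n∈ℕ} of pairwise disjoint finite subsets of I and J respectively, Σ_{n∈ℕ} ‖R_{A_n,B_n}(z)‖_{X⊗πY} ≤ d‖z‖_{X⊗πY} for every z ∈ X ⊗π Y. -/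
open Filter Topology Pointwise MeasureTheory
open scoped ENNReal

/-! Write `z = ∑ᵢ xᵢ ⊗ yᵢ`. Then `‖R_{Aₙ,Bₙ} z‖ ≤ ∑ᵢ ‖P_{Aₙ} xᵢ‖ ‖Q_{Bₙ} yᵢ‖`, and after summing
over `n`, Hölder's inequality (available for `1/p + 1/q ≥ 1` because `ℓ^q ⊆ ℓ^{p'}`) combined with
the two disjoint lower estimates bounds the total by `c_X c_Y ∑ᵢ ‖xᵢ‖ ‖yᵢ‖`. Taking the infimum
over representations gives `d = c_X c_Y` on the algebraic tensor product, and the bound on each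
partial sum passes to the closure by continuity. -/

open Finset

namespace Real

variable {ι : Type*} (s : Finset ι) {f g : ι → ℝ}

theorem sum_rpow_le_rpow_sum_of_nonneg (hf : ∀ i ∈ s, 0 ≤ f i) {t : ℝ} (ht : 1 ≤ t) :
    ∑ i ∈ s, f i ^ t ≤ (∑ i ∈ s, f i) ^ t := by
  induction s using Finset.cons_induction with
  | empty => simp [zero_rpow (by positivity : t ≠ 0)]
  | cons a s _ ih =>
    simp only [mem_cons, forall_eq_or_imp] at hf
    rw [sum_cons, sum_cons]
    calc f a ^ t + ∑ i ∈ s, f i ^ t ≤ f a ^ t + (∑ i ∈ s, f i) ^ t := by gcongr; exact ih hf.2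
      _ ≤ (f a + ∑ i ∈ s, f i) ^ t := add_rpow_le_rpow_add hf.1 (sum_nonneg hf.2) ht

theorem rpow_sum_rpow_le (hf : ∀ i ∈ s, 0 ≤ f i) {p q : ℝ} (hp : 0 < p) (hpq : p ≤ q) :
    (∑ i ∈ s, f i ^ q) ^ (1 / q) ≤ (∑ i ∈ s, f i ^ p) ^ (1 / p) := by
  have hq : 0 < q := hp.trans_le hpq
  have hfp : ∀ i ∈ s, 0 ≤ f i ^ p := fun i hi => rpow_nonneg (hf i hi) p
  have hsum : ∑ i ∈ s, f i ^ q ≤ (∑ i ∈ s, f i ^ p) ^ (q / p) := by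
    calc ∑ i ∈ s, f i ^ q = ∑ i ∈ s, (f i ^ p) ^ (q / p) := by
          refine sum_congr rfl fun i hi => ?_
          rw [← rpow_mul (hf i hi), mul_div_cancel₀ _ hp.ne']
      _ ≤ _ := sum_rpow_le_rpow_sum_of_nonneg s hfp ((one_le_div hp).2 hpq)
  calc (∑ i ∈ s, f i ^ q) ^ (1 / q) ≤ ((∑ i ∈ s, f i ^ p) ^ (q / p)) ^ (1 / q) := by
        gcongr
        exact sum_nonneg fun i hi => rpow_nonneg (hf i hi) q
    _ = (∑ i ∈ s, f i ^ p) ^ (1 / p) := by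
        rw [← rpow_mul (sum_nonneg hfp)]
        field_simp

theorem inner_le_Lp_mul_Lq_of_nonneg_of_one_le_inv_add_inv {p q : ℝ} (hp : 1 < p) (hq : 0 < q)
    (hpq : 1 ≤ 1 / p + 1 / q) (hf : ∀ i ∈ s, 0 ≤ f i) (hg : ∀ i ∈ s, 0 ≤ g i) :
    ∑ i ∈ s, f i * g i ≤ (∑ i ∈ s, f i ^ p) ^ (1 / p) * (∑ i ∈ s, g i ^ q) ^ (1 / q) := by
  have hconj : p.HolderConjugate p.conjExponent := .conjExponent hp
  have hq_le : q ≤ p.conjExponent := by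
    have := hconj.inv_add_inv_eq_one
    rw [one_div, one_div] at hpq
    exact (inv_le_inv₀ hconj.symm.pos hq).mp (by linarith)
  calc ∑ i ∈ s, f i * g i
      ≤ (∑ i ∈ s, f i ^ p) ^ (1 / p) * (∑ i ∈ s, g i ^ p.conjExponent) ^ (1 / p.conjExponent) :=
        inner_le_Lp_mul_Lq_of_nonneg s hconj hf hg
    _ ≤ _ := by
        gcongr
        · exact rpow_nonneg (sum_nonneg fun i hi => rpow_nonneg (hf i hi) p) _
        · exact rpow_sum_rpow_le s hg hq hq_le

end Real

section ProjTensor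

variable {X Y Z : Type*} [NormedAddCommGroup X] [NormedSpace ℝ X] [NormedAddCommGroup Y]
  [NormedSpace ℝ Y] [NormedAddCommGroup Z] [NormedSpace ℝ Z] {t : X →L[ℝ] Y →L[ℝ] Z}

theorem exists_sum_eq_of_mem_span_range_apply {w : Z}
    (hw : w ∈ Submodule.span ℝ {z : Z | ∃ x y, z = t x y}) :
    ∃ (n : ℕ) (x : Fin n → X) (y : Fin n → Y), w = ∑ i, t (x i) (y i) := by
  obtain ⟨n, c, u, rfl⟩ := Submodule.mem_span_set'.mp hw
  choose x y hxy using fun i => (u i).2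
  refine ⟨n, fun i => c i • x i, y, sum_congr rfl fun i _ => ?_⟩
  rw [hxy i, t.map_smul]
  rfl

namespace IsProjTensorProduct

theorem norm_apply_le (ht : IsProjTensorProduct t) (x : X) (y : Y) : ‖t x y‖ ≤ ‖x‖ * ‖y‖ := by
  rw [ht.2.1 _ (Submodule.subset_span ⟨x, y, rfl⟩)]
  refine csInf_le ⟨0, ?_⟩ ⟨1, ![x], ![y], by simp, by simp⟩
  rintro r ⟨n, x, y, -, rfl⟩
  exact sum_nonneg fun i _ => by positivity

theorem le_mul_norm_of_forall_sum_apply (ht : IsProjTensorProduct t) {f : Z → ℝ}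
    (hf : Continuous f) {C : ℝ} (hC : 0 ≤ C)
    (h : ∀ (n : ℕ) (x : Fin n → X) (y : Fin n → Y),
      f (∑ i, t (x i) (y i)) ≤ C * ∑ i, ‖x i‖ * ‖y i‖) (z : Z) :
    f z ≤ C * ‖z‖ := by
  have hspan : ∀ w ∈ Submodule.span ℝ {z : Z | ∃ x y, z = t x y}, f w ≤ C * ‖w‖ := by
    intro w hw
    obtain ⟨n, x, y, hxy⟩ := exists_sum_eq_of_mem_span_range_apply hw
    rw [ht.2.1 w hw, ← smul_eq_mul, ← Real.sInf_smul_of_nonneg hC]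
    refine le_csInf ⟨_, ⟨_, ⟨n, x, y, hxy, rfl⟩, rfl⟩⟩ ?_
    rintro _ ⟨_, ⟨m, x', y', rfl, rfl⟩, rfl⟩
    exact h m x' y'
  have hclosed : IsClosed {w : Z | f w ≤ C * ‖w‖} :=
    isClosed_le hf (continuous_const.mul continuous_norm)
  exact (hclosed.closure_subset_iff.mpr hspan) (ht.1.closure_eq ▸ Set.mem_univ z)

theorem sum_range_norm_le_of_map_apply (ht : IsProjTensorProduct t) {R : ℕ → Z →L[ℝ] Z}
    {P : ℕ → X →L[ℝ] X} {Q : ℕ → Y →L[ℝ] Y} (hR : ∀ n x y, R n (t x y) = t (P n x) (Q n y))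
    {C : ℝ} (hC : 0 ≤ C) (N : ℕ)
    (hPQ : ∀ x y, ∑ n ∈ range N, ‖P n x‖ * ‖Q n y‖ ≤ C * (‖x‖ * ‖y‖)) (z : Z) :
    ∑ n ∈ range N, ‖R n z‖ ≤ C * ‖z‖ := by
  refine ht.le_mul_norm_of_forall_sum_apply (f := fun w => ∑ n ∈ range N, ‖R n w‖)
    (by fun_prop) hC (fun m x y => ?_) z
  calc ∑ n ∈ range N, ‖R n (∑ i, t (x i) (y i))‖
      ≤ ∑ n ∈ range N, ∑ i, ‖P n (x i)‖ * ‖Q n (y i)‖ := by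
        gcongr with n
        simp only [map_sum, hR]
        exact (norm_sum_le _ _).trans (sum_le_sum fun i _ => ht.norm_apply_le _ _)
    _ = ∑ i, ∑ n ∈ range N, ‖P n (x i)‖ * ‖Q n (y i)‖ := sum_comm
    _ ≤ ∑ i, C * (‖x i‖ * ‖y i‖) := sum_le_sum fun i _ => hPQ (x i) (y i)
    _ = C * ∑ i, ‖x i‖ * ‖y i‖ := (mul_sum _ _ _).symm

end IsProjTensorProduct

end ProjTensor

theorem SchauderDecomp.DisjLowerEstimate.exists_sum_range_le {I X : Type*}
    [NormedAddCommGroup X] [NormedSpace ℝ X] {d : SchauderDecomp I X} {p : ℝ}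
    (h : d.DisjLowerEstimate p) :
    ∃ c : ℝ, 0 < c ∧ ∀ A : ℕ → Set I, (∀ n, (A n).Finite) →
      (Pairwise fun m n => Disjoint (A m) (A n)) →
      ∀ (N : ℕ) (x : X), (∑ n ∈ range N, ‖d.proj (A n) x‖ ^ p) ^ (1 / p) ≤ c * ‖x‖ := by
  obtain ⟨c, hc, hest⟩ := h
  refine ⟨c, hc, fun A hfin hdisj N x => ?_⟩
  rw [← Fin.sum_univ_eq_sum_range (fun n => ‖d.proj (A n) x‖ ^ p)]
  exact hest N (fun k => A k) (fun k => hfin k) (fun k l hkl => hdisj (Fin.val_injective.ne hkl)) x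

theorem statement5_general {p q : ℝ} (hp : 1 < p) (hq : 1 < q) (hpq : 1 ≤ 1 / p + 1 / q)
    {I J X Y Z : Type*}
    [NormedAddCommGroup X] [NormedSpace ℝ X]
    [NormedAddCommGroup Y] [NormedSpace ℝ Y]
    [NormedAddCommGroup Z] [NormedSpace ℝ Z]
    (dX : SchauderDecomp I X) (dY : SchauderDecomp J Y)
    (hpX : dX.DisjLowerEstimate p) (hqY : dY.DisjLowerEstimate q)
    (t : X →L[ℝ] Y →L[ℝ] Z) (ht : IsProjTensorProduct t) :
    ∃ d : ℝ, 0 < d ∧ ∀ (A : ℕ → Set I) (B : ℕ → Set J),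
      (∀ n, (A n).Finite) → (∀ n, (B n).Finite) →
      (Pairwise fun m n => Disjoint (A m) (A n)) →
      (Pairwise fun m n => Disjoint (B m) (B n)) →
      ∀ R : ℕ → Z →L[ℝ] Z,
        (∀ n x y, R n (t x y) = t (dX.proj (A n) x) (dY.proj (B n) y)) →
        ∀ z : Z, Summable (fun n => ‖R n z‖) ∧ ∑' n, ‖R n z‖ ≤ d * ‖z‖ := by
  obtain ⟨cX, hcX, hX⟩ := hpX.exists_sum_range_le
  obtain ⟨cY, hcY, hY⟩ := hqY.exists_sum_range_le
  refine ⟨cX * cY, mul_pos hcX hcY, fun A B hAfin hBfin hAdisj hBdisj R hR z => ?_⟩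
  have hxy : ∀ (N : ℕ) (x : X) (y : Y),
      ∑ n ∈ range N, ‖dX.proj (A n) x‖ * ‖dY.proj (B n) y‖ ≤ cX * cY * (‖x‖ * ‖y‖) := by
    intro N x y
    calc _ ≤ (∑ n ∈ range N, ‖dX.proj (A n) x‖ ^ p) ^ (1 / p) *
          (∑ n ∈ range N, ‖dY.proj (B n) y‖ ^ q) ^ (1 / q) :=
          Real.inner_le_Lp_mul_Lq_of_nonneg_of_one_le_inv_add_inv _ hp (by linarith) hpq
            (fun n _ => norm_nonneg _) (fun n _ => norm_nonneg _)
      _ ≤ (cX * ‖x‖) * (cY * ‖y‖) :=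
          mul_le_mul (hX A hAfin hAdisj N x) (hY B hBfin hBdisj N y) (by positivity)
            (by positivity)
      _ = cX * cY * (‖x‖ * ‖y‖) := by ring
  have hpartial : ∀ N, ∑ n ∈ range N, ‖R n z‖ ≤ cX * cY * ‖z‖ := fun N =>
    ht.sum_range_norm_le_of_map_apply hR (by positivity) N (hxy N) z
  exact ⟨summable_of_sum_range_le (fun n => norm_nonneg _) hpartial,
    Real.tsum_le_of_sum_range_le (fun n => norm_nonneg _) hpartial⟩

/-- under disjoint lower `p`/`q`-estimates with `1/p + 1/q ≥ 1`, there is `d > 0`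
with `Σₙ ‖R_{Aₙ,Bₙ}(z)‖ ≤ d‖z‖` for all sequences of pairwise disjoint finite sets. -/
theorem statement5 {p q : ℝ} (hp : 1 < p) (hq : 1 < q) (hpq : 1 ≤ 1 / p + 1 / q)
    {I J X Y Z : Type*}
    [NormedAddCommGroup X] [NormedSpace ℝ X] [CompleteSpace X]
    [NormedAddCommGroup Y] [NormedSpace ℝ Y] [CompleteSpace Y]
    [NormedAddCommGroup Z] [NormedSpace ℝ Z] [CompleteSpace Z]
    (dX : SchauderDecomp I X) (dY : SchauderDecomp J Y)
    (hpX : dX.DisjLowerEstimate p) (hqY : dY.DisjLowerEstimate q)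
    (hPnorm : ∀ C : Set I, C.Nonempty → ‖dX.proj C‖ ≤ 1)
    (hQnorm : ∀ D : Set J, D.Nonempty → ‖dY.proj D‖ ≤ 1)
    (t : X →L[ℝ] Y →L[ℝ] Z) (ht : IsProjTensorProduct t) :
    ∃ d : ℝ, 0 < d ∧ ∀ (A : ℕ → Set I) (B : ℕ → Set J),
      (∀ n, (A n).Finite) → (∀ n, (B n).Finite) →
      (Pairwise fun m n => Disjoint (A m) (A n)) →
      (Pairwise fun m n => Disjoint (B m) (B n)) →
      ∀ R : ℕ → Z →L[ℝ] Z,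
        (∀ n x y, R n (t x y) = t (dX.proj (A n) x) (dY.proj (B n) y)) →
        ∀ z : Z, Summable (fun n => ‖R n z‖) ∧ ∑' n, ‖R n z‖ ≤ d * ‖z‖ :=
  statement5_general hp hq hpq dX dY hpX hqY t ht
end

section
/- Let U be a finite-dimensional Banach space with d = dim(U) and let V be a Banach space which is strongly weakly compactly generated by the weakly compact set G ⊆ V. Then the projective tensor product U ⊗π V is strongly weakly compactly generated by the weakly compact set G' := Σ_{i=1}^d B_U ⊗ G, the Minkowski sum of d copies of the set {u ⊗ g : u ∈ B_U, g ∈ G}. -/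
open Filter Topology Pointwise MeasureTheory
open scoped ENNReal

/-! Normalise a basis `b` of `U` to the unit sphere. Testing against the functionals `c_i ⊗ f`
(`c_i` the coordinate functionals of `b`), which exist on `U ⊗π V` by the extension property,
shows that `v ↦ ∑ i, b i ⊗ v i` is bounded below on `V^d`; its range is therefore closed, and it
contains every elementary tensor, so this map is an isomorphism `V^d ≅ U ⊗π V`. Strong generation
passes from `G` to `G^d` (project a weakly compact set of `V^d` to its coordinates), then through
the isomorphism, and the image of `G^d` lies in `G'`. Finally `G'` is weakly compact because
`(u, v) ↦ u ⊗ v` is jointly continuous on `U × (V, weak)` when `U` is finite dimensional. -/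

open Metric

/-- The second clause of `SWCGBy`, so that `SWCGBy G` is `WeaklyCompact G ∧ StronglyGenerates G`. -/
def StronglyGenerates {Z : Type*} [NormedAddCommGroup Z] [NormedSpace ℝ Z] (G : Set Z) : Prop :=
  ∀ K : Set Z, WeaklyCompact K → ∀ ε : ℝ, 0 < ε → ∃ n : ℕ, K ⊆ (n : ℝ) • G + closedBall (0 : Z) ε

section WeakCompactness

variable {Y W : Type*} [NormedAddCommGroup Y] [NormedSpace ℝ Y]
  [NormedAddCommGroup W] [NormedSpace ℝ W]

theorem WeaklyCompact.image_continuousLinearMap {K : Set Y} (hK : WeaklyCompact K)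
    (T : Y →L[ℝ] W) : WeaklyCompact (T '' K) := by
  have : toWeakSpace ℝ W '' (T '' K) = WeakSpace.map T '' (toWeakSpace ℝ Y '' K) := by
    simp only [Set.image_image]; rfl
  rw [WeaklyCompact, this]
  exact hK.image (WeakSpace.map T).continuous

theorem WeaklyCompact.iUnion {ι : Type*} [Finite ι] {K : ι → Set Y}
    (hK : ∀ i, WeaklyCompact (K i)) : WeaklyCompact (⋃ i, K i) := by
  rw [WeaklyCompact, Set.image_iUnion]
  exact isCompact_iUnion hK

theorem StronglyGenerates.mono {G H : Set Y} (hG : StronglyGenerates G) (hGH : G ⊆ H) :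
    StronglyGenerates H := fun K hK ε hε =>
  (hG K hK ε hε).imp fun _ hn =>
    hn.trans (Set.add_subset_add (Set.smul_set_mono hGH) le_rfl)

theorem StronglyGenerates.pi {ι : Type*} [Fintype ι] {G : Set Y} (hG : StronglyGenerates G) :
    StronglyGenerates (Set.univ.pi fun _ : ι => G) := by
  intro K hK ε hε
  obtain ⟨n, hn⟩ := hG _
    (WeaklyCompact.iUnion fun i => hK.image_continuousLinearMap (ContinuousLinearMap.proj i)) ε hε
  refine ⟨n, fun v hv => ?_⟩
  have hdecomp : ∀ i, ∃ g ∈ G, ∃ w ∈ closedBall (0 : Y) ε, (n : ℝ) • g + w = v i := by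
    intro i
    obtain ⟨_, ⟨g, hg, rfl⟩, w, hw, h⟩ := hn (Set.mem_iUnion.2 ⟨i, v, hv, rfl⟩)
    exact ⟨g, hg, w, hw, h⟩
  choose g hg w hw hgw using hdecomp
  refine ⟨(n : ℝ) • g, Set.smul_mem_smul_set fun i _ => hg i, w, ?_, funext hgw⟩
  rw [mem_closedBall_zero_iff, pi_norm_le_iff_of_nonneg hε.le]
  exact fun i => mem_closedBall_zero_iff.1 (hw i)

theorem StronglyGenerates.image_equiv {G : Set Y} (hG : StronglyGenerates G) (E : Y ≃L[ℝ] W) :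
    StronglyGenerates (E '' G) := by
  intro K hK ε hε
  set C := ‖(E : Y →L[ℝ] W)‖ + 1
  have hC : 0 < C := by positivity
  obtain ⟨n, hn⟩ := hG _ (hK.image_continuousLinearMap (E.symm : W →L[ℝ] Y)) (ε / C) (by positivity)
  refine ⟨n, fun z hz => ?_⟩
  obtain ⟨_, ⟨g, hg, rfl⟩, w, hw, h⟩ := hn ⟨z, hz, rfl⟩
  refine ⟨(n : ℝ) • E g, Set.smul_mem_smul_set ⟨g, hg, rfl⟩, E w, ?_, ?_⟩
  · rw [mem_closedBall_zero_iff] at hw ⊢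
    calc ‖E w‖ ≤ ‖(E : Y →L[ℝ] W)‖ * ‖w‖ := (E : Y →L[ℝ] W).le_opNorm w
      _ ≤ C * (ε / C) := by gcongr; linarith
      _ = ε := mul_div_cancel₀ ε hC.ne'
  · have h' : (n : ℝ) • g + w = E.symm z := h
    change (n : ℝ) • E g + E w = z
    rw [← map_smul, ← map_add, h', E.apply_symm_apply]

end WeakCompactness

section ProjectiveTensor

variable {U V Z : Type*} [NormedAddCommGroup U] [NormedSpace ℝ U]
  [NormedAddCommGroup V] [NormedSpace ℝ V] [NormedAddCommGroup Z] [NormedSpace ℝ Z]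
  (t : U →L[ℝ] V →L[ℝ] Z)

theorem IsProjTensorProduct.exists_extension (ht : IsProjTensorProduct t)
    (B : U →L[ℝ] V →L[ℝ] ℝ) : ∃ φ : Z →L[ℝ] ℝ, ‖φ‖ ≤ ‖B‖ ∧ ∀ x y, φ (t x y) = B x y := by
  rcases eq_or_ne B 0 with rfl | hB
  · exact ⟨0, by simp only [ContinuousLinearMap.opNorm_zero, le_refl], by simp⟩
  have hB' : 0 < ‖B‖ := (norm_pos_iff (a := B)).2 hB
  have hnormB : ‖‖B‖‖ = ‖B‖ := Real.norm_of_nonneg hB'.le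
  obtain ⟨φ, hφ, hφB⟩ := ht.2.2 (‖B‖⁻¹ • B) <| (B.opNorm_smul_le ‖B‖⁻¹).trans_eq <| by
    rw [norm_inv, hnormB, inv_mul_cancel₀ hB'.ne']
  refine ⟨‖B‖ • φ, (φ.opNorm_smul_le ‖B‖).trans ?_, fun x y => ?_⟩
  · rw [hnormB]
    exact mul_le_of_le_one_right hB'.le hφ
  · simp [hφB, hB'.ne']

/-- `v ↦ ∑ i, b i ⊗ v i`; an isomorphism `V^ι ≅ U ⊗π V` when `b` is a basis of `U`. -/
noncomputable def basisSum {ι : Type*} [Fintype ι] (b : ι → U) : (ι → V) →L[ℝ] Z :=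
  ∑ i, (t (b i)).comp (ContinuousLinearMap.proj i)

theorem basisSum_apply {ι : Type*} [Fintype ι] (b : ι → U) (v : ι → V) :
    basisSum t b v = ∑ i, t (b i) (v i) := by
  simp [basisSum]

variable [FiniteDimensional ℝ U] {ι : Type*} [Fintype ι]

theorem IsProjTensorProduct.norm_le_basisSum (ht : IsProjTensorProduct t)
    (b : Module.Basis ι ℝ U) (v : ι → V) (i : ι) :
    ‖v i‖ ≤ ‖LinearMap.toContinuousLinearMap (b.coord i)‖ * ‖basisSum t b v‖ := by
  set c := LinearMap.toContinuousLinearMap (b.coord i)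
  refine NormedSpace.norm_le_dual_bound ℝ _ (by positivity) fun f => ?_
  obtain ⟨φ, hφ, hφt⟩ := ht.exists_extension t (c.smulRight f)
  have hφv : φ (basisSum t b v) = f (v i) := by
    classical
    simp only [basisSum_apply, map_sum, hφt, ContinuousLinearMap.smulRight_apply,
      FunLike.coe_smul, Pi.smul_apply, smul_eq_mul, c, LinearMap.coe_toContinuousLinearMap',
      Module.Basis.coord_apply, Module.Basis.repr_self, Finsupp.single_apply]
    simp
  rw [ContinuousLinearMap.norm_smulRight_apply] at hφ
  calc ‖f (v i)‖ = ‖φ (basisSum t b v)‖ := by rw [hφv]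
    _ ≤ ‖φ‖ * ‖basisSum t b v‖ := φ.le_opNorm _
    _ ≤ ‖c‖ * ‖f‖ * ‖basisSum t b v‖ := by gcongr
    _ = ‖c‖ * ‖basisSum t b v‖ * ‖f‖ := by ring

theorem IsProjTensorProduct.norm_le_mul_norm_basisSum (ht : IsProjTensorProduct t)
    (b : Module.Basis ι ℝ U) (v : ι → V) :
    ‖v‖ ≤ (∑ i, ‖LinearMap.toContinuousLinearMap (b.coord i)‖₊ : NNReal) * ‖basisSum t b v‖ := by
  refine (pi_norm_le_iff_of_nonneg (by positivity)).2 fun i =>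
    (ht.norm_le_basisSum t b v i).trans ?_
  gcongr
  rw [NNReal.coe_sum]
  exact Finset.single_le_sum (f := fun j => ‖LinearMap.toContinuousLinearMap (b.coord j)‖₊.toReal)
    (fun j _ => NNReal.coe_nonneg _) (Finset.mem_univ i)

theorem IsProjTensorProduct.surjective_basisSum [CompleteSpace V] (ht : IsProjTensorProduct t)
    (b : Module.Basis ι ℝ U) : Function.Surjective (basisSum t b) := by
  have hclosed : IsClosed (Set.range (basisSum t b)) :=
    ((basisSum t b).antilipschitz_of_bound (ht.norm_le_mul_norm_basisSum t b)).isClosed_range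
      (basisSum t b).uniformContinuous
  have htensor : {z : Z | ∃ x y, z = t x y} ⊆ Set.range (basisSum t b) := by
    rintro _ ⟨x, y, rfl⟩
    refine ⟨fun i => b.coord i x • y, ?_⟩
    conv_rhs => rw [← b.sum_repr x, map_sum]
    simp [basisSum_apply]
  have hspan : (Submodule.span ℝ {z : Z | ∃ x y, z = t x y} : Set Z) ⊆ Set.range (basisSum t b) :=
    (Submodule.span_le (p := LinearMap.range (basisSum t b : (ι → V) →ₗ[ℝ] Z))).2 htensor
  refine Set.range_eq_univ.1 ?_
  rw [← hclosed.closure_eq]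
  exact (ht.1.mono hspan).closure_eq

theorem IsProjTensorProduct.exists_continuousLinearEquiv_pi [CompleteSpace V]
    (ht : IsProjTensorProduct t) (b : Module.Basis ι ℝ U) :
    ∃ E : (ι → V) ≃L[ℝ] Z, ⇑E = basisSum t b := by
  have hbound := ht.norm_le_mul_norm_basisSum t b
  let e := LinearEquiv.ofBijective (basisSum t b : (ι → V) →ₗ[ℝ] Z)
    ⟨((basisSum t b).antilipschitz_of_bound hbound).injective, ht.surjective_basisSum t b⟩
  refine ⟨e.toContinuousLinearEquivOfBounds _
    ((∑ i, ‖LinearMap.toContinuousLinearMap (b.coord i)‖₊ : NNReal) : ℝ)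
    (basisSum t b).le_opNorm fun z => ?_, rfl⟩
  have hz : basisSum t b (e.symm z) = z := e.apply_symm_apply z
  simpa only [hz] using hbound (e.symm z)

end ProjectiveTensor

theorem Module.Basis.exists_norm_eq_one {ι U : Type*} [NormedAddCommGroup U] [NormedSpace ℝ U]
    (b : Module.Basis ι ℝ U) : ∃ b' : Module.Basis ι ℝ U, ∀ i, ‖b' i‖ = 1 := by
  have hb : ∀ i, ‖b i‖ ≠ 0 := fun i => norm_ne_zero_iff.2 (b.ne_zero i)
  refine ⟨b.unitsSMul fun i => Units.mk0 ‖b i‖⁻¹ (inv_ne_zero (hb i)), fun i => ?_⟩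
  rw [Module.Basis.unitsSMul_apply, Units.smul_mk0, _root_.norm_smul, norm_inv, norm_norm,
    inv_mul_cancel₀ (hb i)]

section WeakTopology

variable {U V Z : Type*} [NormedAddCommGroup U] [NormedSpace ℝ U]
  [NormedAddCommGroup V] [NormedSpace ℝ V] [NormedAddCommGroup Z] [NormedSpace ℝ Z]
  (t : U →L[ℝ] V →L[ℝ] Z)

/-- The set `G' = Σ_{i ∈ ι} B_U ⊗ G`. -/
def ballTensorSum (ι : Type*) [Fintype ι] (G : Set V) : Set Z :=
  {z | ∃ (u : ι → U) (v : ι → V), (∀ i, ‖u i‖ ≤ 1) ∧ (∀ i, v i ∈ G) ∧ z = ∑ i, t (u i) (v i)}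

variable [FiniteDimensional ℝ U]

theorem continuous_toWeakSpace_apply :
    Continuous fun p : U × WeakSpace ℝ V => toWeakSpace ℝ Z (t p.1 ((toWeakSpace ℝ V).symm p.2)) := by
  let b := Module.finBasis ℝ U
  have hexpand : (fun p : U × WeakSpace ℝ V => toWeakSpace ℝ Z (t p.1 ((toWeakSpace ℝ V).symm p.2)))
      = fun p => ∑ i, b.coord i p.1 • WeakSpace.map (t (b i)) p.2 := by
    funext ⟨x, w⟩
    conv_lhs => rw [← b.sum_repr x, map_sum]
    simp
    rfl
  rw [hexpand]
  refine continuous_finsetSum _ fun i _ => ?_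
  exact ((b.coord i).continuous_of_finiteDimensional.comp continuous_fst).smul
    ((WeakSpace.map (t (b i))).continuous.comp continuous_snd)

theorem weaklyCompact_ballTensorSum {ι : Type*} [Fintype ι] {G : Set V} (hG : WeaklyCompact G) :
    WeaklyCompact (ballTensorSum t ι G) := by
  let S : Set ((ι → U) × (ι → WeakSpace ℝ V)) :=
    (Set.univ.pi fun _ => closedBall 0 1) ×ˢ (Set.univ.pi fun _ => toWeakSpace ℝ V '' G)
  have hS : IsCompact S :=
    (isCompact_univ_pi fun _ => isCompact_closedBall 0 1).prod (isCompact_univ_pi fun _ => hG)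
  let F : (ι → U) × (ι → WeakSpace ℝ V) → WeakSpace ℝ Z :=
    fun p => ∑ i, toWeakSpace ℝ Z (t (p.1 i) ((toWeakSpace ℝ V).symm (p.2 i)))
  have hF : Continuous F := continuous_finsetSum _ fun i _ => by
    have hpair : Continuous fun p : (ι → U) × (ι → WeakSpace ℝ V) => (p.1 i, p.2 i) := by fun_prop
    exact (continuous_toWeakSpace_apply t).comp hpair
  have himage : toWeakSpace ℝ Z '' ballTensorSum t ι G = F '' S := by
    ext z
    constructor
    · rintro ⟨_, ⟨u, v, hu, hv, rfl⟩, rfl⟩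
      refine ⟨(u, fun i => toWeakSpace ℝ V (v i)), ⟨fun i _ => mem_closedBall_zero_iff.2 (hu i),
        fun i _ => ⟨v i, hv i, rfl⟩⟩, ?_⟩
      simp [F]
    · rintro ⟨⟨u, w⟩, ⟨hu, hw⟩, rfl⟩
      choose v hv hvw using fun i => (hw i (Set.mem_univ i) : w i ∈ toWeakSpace ℝ V '' G)
      refine ⟨_, ⟨u, v, fun i => mem_closedBall_zero_iff.1 (hu i (Set.mem_univ i)), hv, rfl⟩, ?_⟩
      have hw' : w = fun i => toWeakSpace ℝ V (v i) := funext fun i => (hvw i).symm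
      simp [F, hw']
  rw [WeaklyCompact, himage]
  exact hS.image hF

end WeakTopology

theorem statement7_general {U V Z : Type*}
    [NormedAddCommGroup U] [NormedSpace ℝ U] [FiniteDimensional ℝ U]
    [NormedAddCommGroup V] [NormedSpace ℝ V] [CompleteSpace V]
    [NormedAddCommGroup Z] [NormedSpace ℝ Z]
    (t : U →L[ℝ] V →L[ℝ] Z) (ht : IsProjTensorProduct t)
    (G : Set V) (hG : SWCGBy G) :
    SWCGBy {z : Z | ∃ (u : Fin (Module.finrank ℝ U) → U) (v : Fin (Module.finrank ℝ U) → V),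
      (∀ i, ‖u i‖ ≤ 1) ∧ (∀ i, v i ∈ G) ∧ z = ∑ i, t (u i) (v i)} := by
  obtain ⟨b, hb⟩ := (Module.finBasis ℝ U).exists_norm_eq_one
  obtain ⟨E, hE⟩ := ht.exists_continuousLinearEquiv_pi t b
  refine ⟨weaklyCompact_ballTensorSum t hG.1, ?_⟩
  have hgen : StronglyGenerates (E '' Set.univ.pi fun _ => G) :=
    (StronglyGenerates.pi hG.2).image_equiv E
  refine hgen.mono ?_
  rintro _ ⟨v, hv, rfl⟩
  exact ⟨b, v, fun i => (hb i).le, fun i => hv i (Set.mem_univ i), by rw [hE, basisSum_apply]⟩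

/-- if `U` is finite dimensional with `d = dim U` and `V` is SWCG by `G`, then
`U ⊗π V` is SWCG by `G' = Σ_{i=1}^d B_U ⊗ G`. -/
theorem statement7 {U V Z : Type*}
    [NormedAddCommGroup U] [NormedSpace ℝ U] [FiniteDimensional ℝ U]
    [NormedAddCommGroup V] [NormedSpace ℝ V] [CompleteSpace V]
    [NormedAddCommGroup Z] [NormedSpace ℝ Z] [CompleteSpace Z]
    (t : U →L[ℝ] V →L[ℝ] Z) (ht : IsProjTensorProduct t)
    (G : Set V) (hG : SWCGBy G) :
    SWCGBy {z : Z | ∃ (u : Fin (Module.finrank ℝ U) → U) (v : Fin (Module.finrank ℝ U) → V),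
      (∀ i, ‖u i‖ ≤ 1) ∧ (∀ i, v i ∈ G) ∧ z = ∑ i, t (u i) (v i)} :=
  statement7_general t ht G hG
end
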